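/- arXiv:math/9904145 — 2 statements merged into one kernel-verified Lean document; each statement's English description precedes it below -/
import Mathlib

section
/- Let f: G → H be a homomorphism of simplicial groups such that f_n: G_n → H_n is surjective for every n. Then the induced map of underlying simplicial sets is a Kan fibration. -/
/-!
Moore's algorithm fills horns inside any simplicial subgroup, in particular inside the kernel
of `f`: starting from `1`, the faces are matched one at a time, first upwards below the missing
face `i`, then downwards above it, each time multiplying by a degenerate correction term.
To lift a horn `u` over a simplex `y` of `H`, lift `y` to some `k` in `G`; the family
`u_j * (δ_j k)⁻¹` is a horn in the kernel, and if `w` fills it then `w * k` is the required lift.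
-/

open CategoryTheory Simplicial Opposite

universe u

namespace SSet

variable {X Y : SSet.{u}}

/-- The elementwise form of `SSet.horn.IsCompatible`. -/
def horn.IsCompatibleSimplices {n : ℕ} {i : Fin (n + 2)} (x : ∀ j : Fin (n + 2), j ≠ i → X _⦋n⦌) :
    Prop :=
  match n with
  | 0 => True
  | _ + 1 => ∀ (j k : Fin _) (hj : j ≠ i) (hk : k ≠ i) (hjk : j < k),
      X.δ (k.pred (Fin.ne_zero_of_lt hjk)) (x j hj) =
        X.δ (j.castPred (Fin.ne_last_of_lt hjk)) (x k hk)

lemma horn.isCompatibleSimplices_app_face {n : ℕ} {i : Fin (n + 2)}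
    (u : (Λ[n + 1, i] : SSet) ⟶ X) :
    horn.IsCompatibleSimplices (fun j hj ↦ u.app _ (horn.face i j hj)) := by
  obtain _ | n := n
  · trivial
  · intro j k hj hk hjk
    have := congrArg yonedaEquiv ((horn.IsCompatible.of_hom u).δ_pred_comp j k hj hk hjk)
    rwa [stdSimplex.yonedaEquiv_δ_comp, stdSimplex.yonedaEquiv_δ_comp, yonedaEquiv_comp,
      yonedaEquiv_comp, horn.yonedaEquiv_ι, horn.yonedaEquiv_ι] at this

lemma horn.isCompatibleSimplices_δ {n : ℕ} {i : Fin (n + 2)} (y : X _⦋n + 1⦌) :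
    horn.IsCompatibleSimplices (i := i) (fun j _ ↦ X.δ j y) := by
  obtain _ | n := n
  · trivial
  · intro j k _ _ hjk
    simpa using (δ_comp_δ'_apply (i := j.castPred (Fin.ne_last_of_lt hjk)) (j := k)
      (by simpa using hjk) y).symm

lemma horn.IsCompatibleSimplices.δ_castPred_δ_eq {n : ℕ} {i : Fin (n + 3)}
    {x : ∀ j : Fin (n + 3), j ≠ i → X _⦋n + 1⦌} (hx : horn.IsCompatibleSimplices x)
    {w : X _⦋n + 2⦌} {j t : Fin (n + 3)} (hj : j ≠ i) (ht : t ≠ i) (hw : X.δ j w = x j hj)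
    (hjt : j < t) :
    X.δ (j.castPred (Fin.ne_last_of_lt hjt)) (X.δ t w) =
      X.δ (j.castPred (Fin.ne_last_of_lt hjt)) (x t ht) := by
  have hδδ := δ_comp_δ'_apply (i := j.castPred (Fin.ne_last_of_lt hjt)) (by simpa using hjt) w
  simp only [Fin.castSucc_castPred] at hδδ
  rw [hδδ, hw, hx j t hj ht hjt]

lemma horn.IsCompatibleSimplices.δ_pred_δ_eq {n : ℕ} {i : Fin (n + 3)}
    {x : ∀ j : Fin (n + 3), j ≠ i → X _⦋n + 1⦌} (hx : horn.IsCompatibleSimplices x)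
    {w : X _⦋n + 2⦌} {j t : Fin (n + 3)} (hj : j ≠ i) (ht : t ≠ i) (hw : X.δ j w = x j hj)
    (htj : t < j) :
    X.δ (j.pred (Fin.ne_zero_of_lt htj)) (X.δ t w) =
      X.δ (j.pred (Fin.ne_zero_of_lt htj)) (x t ht) := by
  have hδδ := δ_comp_δ'_apply (i := t.castPred (Fin.ne_last_of_lt htj)) (by simpa using htj) w
  simp only [Fin.castSucc_castPred] at hδδ
  rw [hx t j ht hj htj, ← hw, hδδ]

lemma horn.hasLiftingProperty_of_exists_lift {n : ℕ} {i : Fin (n + 2)} (p : X ⟶ Y)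
    (h : ∀ (u : (Λ[n + 1, i] : SSet) ⟶ X) (y : Y _⦋n + 1⦌),
      (∀ j hj, Y.δ j y = p.app _ (u.app _ (horn.face i j hj))) →
      ∃ x : X _⦋n + 1⦌, (∀ j hj, X.δ j x = u.app _ (horn.face i j hj)) ∧ p.app _ x = y) :
    HasLiftingProperty Λ[n + 1, i].ι p where
  sq_hasLift {u v} sq := by
    obtain ⟨x, hx, hxy⟩ := h u (yonedaEquiv v) fun j hj ↦ by
      rw [← stdSimplex.yonedaEquiv_δ_comp, ← horn.ι_ι i j hj, Category.assoc, ← sq.w]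
      rfl
    exact ⟨⟨{
      l := yonedaEquiv.symm x
      fac_left := horn.hom_ext _ _ fun j hj ↦ by
        rw [← hx j hj, ← horn.yonedaEquiv_ι, ← yonedaEquiv_comp, horn.ι_ι_assoc,
          stdSimplex.δ_comp_yonedaEquiv_symm, Equiv.apply_symm_apply]
      fac_right := yonedaEquiv.injective <| by
        rw [yonedaEquiv_comp, Equiv.apply_symm_apply, hxy] }⟩⟩

lemma horn.hasLiftingProperty_zero (i : Fin 1) (p : X ⟶ Y)
    (hp : Function.Surjective (p.app (op ⦋0⦌))) : HasLiftingProperty Λ[0, i].ι p where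
  sq_hasLift {_ v} _ := by
    obtain ⟨x, hx⟩ := hp (yonedaEquiv v)
    exact ⟨⟨{
      l := yonedaEquiv.symm x
      fac_left := by
        ext m ⟨s, hs⟩
        rw [mem_horn_iff] at hs
        exact absurd (Set.eq_univ_of_forall fun a ↦ Or.inr (Subsingleton.elim a i)) hs
      fac_right := yonedaEquiv.injective <| by
        rw [yonedaEquiv_comp, Equiv.apply_symm_apply, hx] }⟩⟩

end SSet

namespace CategoryTheory.SimplicialObject

abbrev toSSet (G : SimplicialObject GrpCat.{u}) : SSet.{u} := G ⋙ forget GrpCat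

variable {G : SimplicialObject GrpCat.{u}}

@[simp]
lemma toSSet_δ_mul {n : ℕ} (j : Fin (n + 2)) (a b : G.toSSet _⦋n + 1⦌) :
    G.toSSet.δ j (a * b) = G.toSSet.δ j a * G.toSSet.δ j b :=
  map_mul (G.δ j).hom a b

@[simp]
lemma toSSet_δ_inv {n : ℕ} (j : Fin (n + 2)) (a : G.toSSet _⦋n + 1⦌) :
    G.toSSet.δ j a⁻¹ = (G.toSSet.δ j a)⁻¹ :=
  map_inv (G.δ j).hom a

@[simp]
lemma toSSet_δ_one {n : ℕ} (j : Fin (n + 2)) : G.toSSet.δ j 1 = 1 :=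
  map_one (G.δ j).hom

@[simp]
lemma toSSet_σ_one {n : ℕ} (j : Fin (n + 1)) : G.toSSet.σ j 1 = 1 :=
  map_one (G.σ j).hom

lemma toSSet_δ_naturality {H : SimplicialObject GrpCat.{u}} (f : G ⟶ H) {n : ℕ}
    (j : Fin (n + 2)) (a : G.toSSet _⦋n + 1⦌) :
    (f.app _).hom (G.toSSet.δ j a) = H.toSSet.δ j ((f.app _).hom a) :=
  SSet.δ_naturality_apply (Functor.whiskerRight f (forget GrpCat)) j a

lemma toSSet_σ_naturality {H : SimplicialObject GrpCat.{u}} (f : G ⟶ H) {n : ℕ}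
    (j : Fin (n + 1)) (a : G.toSSet _⦋n⦌) :
    (f.app _).hom (G.toSSet.σ j a) = H.toSSet.σ j ((f.app _).hom a) :=
  SSet.σ_naturality_apply (Functor.whiskerRight f (forget GrpCat)) j a

lemma isCompatibleSimplices_mul_inv {n : ℕ} {i : Fin (n + 2)}
    {x y : ∀ j : Fin (n + 2), j ≠ i → G.toSSet _⦋n⦌}
    (hx : SSet.horn.IsCompatibleSimplices x) (hy : SSet.horn.IsCompatibleSimplices y) :
    SSet.horn.IsCompatibleSimplices (fun j hj ↦ x j hj * (y j hj)⁻¹) := by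
  obtain _ | n := n
  · trivial
  · intro j k hj hk hjk
    simp only [toSSet_δ_mul, toSSet_δ_inv, hx j k hj hk hjk, hy j k hj hk hjk]

lemma δ_σ_eq_one_of_lt {n : ℕ} {j : Fin (n + 3)} {r : Fin (n + 2)} (hjr : j < r.castSucc)
    {z : G.toSSet _⦋n + 1⦌} (hz : G.toSSet.δ (j.castPred (Fin.ne_last_of_lt hjr)) z = 1) :
    G.toSSet.δ j (G.toSSet.σ r z) = 1 := by
  obtain ⟨r, rfl⟩ := Fin.eq_succ_of_ne_zero (show r ≠ 0 by rintro rfl; simp at hjr)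
  obtain ⟨j, rfl⟩ := Fin.eq_castSucc_of_ne_last (Fin.ne_last_of_lt hjr)
  simp only [Fin.castPred_castSucc] at hz
  have hjr : j ≤ r.castSucc := by simpa [Fin.lt_def, Fin.le_def, Nat.lt_succ_iff] using hjr
  rw [SSet.δ_comp_σ_of_le_apply hjr, hz, toSSet_σ_one]

lemma δ_σ_eq_one_of_gt {n : ℕ} {j : Fin (n + 3)} {r : Fin (n + 2)} (hrj : r.succ < j)
    {z : G.toSSet _⦋n + 1⦌} (hz : G.toSSet.δ (j.pred (Fin.ne_zero_of_lt hrj)) z = 1) :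
    G.toSSet.δ j (G.toSSet.σ r z) = 1 := by
  rw [SSet.δ_comp_σ_of_gt'_apply hrj, hz, toSSet_σ_one]

structure SimplicialSubgroup (G : SimplicialObject GrpCat.{u}) where
  obj (n : ℕ) : Subgroup (G.toSSet _⦋n⦌)
  δ_mem {n : ℕ} (j : Fin (n + 2)) {a : G.toSSet _⦋n + 1⦌} :
    a ∈ obj (n + 1) → G.toSSet.δ j a ∈ obj n
  σ_mem {n : ℕ} (j : Fin (n + 1)) {a : G.toSSet _⦋n⦌} :
    a ∈ obj n → G.toSSet.σ j a ∈ obj (n + 1)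

namespace SimplicialSubgroup

def ker {H : SimplicialObject GrpCat.{u}} (f : G ⟶ H) : SimplicialSubgroup G where
  obj n := (f.app (op ⦋n⦌)).hom.ker
  δ_mem {n} j {a} ha := by
    rw [MonoidHom.mem_ker] at ha ⊢
    rw [toSSet_δ_naturality, ha, toSSet_δ_one]
  σ_mem {n} j {a} ha := by
    rw [MonoidHom.mem_ker] at ha ⊢
    rw [toSSet_σ_naturality, ha, toSSet_σ_one]

variable (K : SimplicialSubgroup G)

/-- One step of Moore's algorithm, `w ↦ w * σ_r ((δ_t w)⁻¹ * x_t)`: for `j ∉ {r, r + 1}`,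
`δ_j σ_r` factors through a face of the correction term, which is trivial when `w` already
matches `x` at `j`. -/
lemma exists_mem_δ_eq_of_δ_eq {n : ℕ} {i : Fin (n + 3)}
    {x : ∀ j : Fin (n + 3), j ≠ i → G.toSSet _⦋n + 1⦌} (hx : SSet.horn.IsCompatibleSimplices x)
    (hxK : ∀ j hj, x j hj ∈ K.obj (n + 1)) {w : G.toSSet _⦋n + 2⦌} (hw : w ∈ K.obj (n + 2))
    {t : Fin (n + 3)} (ht : t ≠ i) (r : Fin (n + 2)) (htr : (t : ℕ) = r ∨ (t : ℕ) = r + 1) :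
    ∃ w' ∈ K.obj (n + 2), G.toSSet.δ t w' = x t ht ∧
      ∀ j (hj : j ≠ i), ((j : ℕ) < r ∨ (r : ℕ) + 1 < j) →
        G.toSSet.δ j w = x j hj → G.toSSet.δ j w' = x j hj := by
  set z := (G.toSSet.δ t w)⁻¹ * x t ht
  refine ⟨w * G.toSSet.σ r z,
    mul_mem hw (K.σ_mem _ (mul_mem (inv_mem (K.δ_mem _ hw)) (hxK t ht))),
    ?_, fun j hj hjr hwj ↦ ?_⟩
  · have hδσ : G.toSSet.δ t (G.toSSet.σ r z) = z := by
      rcases htr with htr | htr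
      · rw [show t = r.castSucc from Fin.ext htr, SSet.δ_comp_σ_self_apply]
      · rw [show t = r.succ from Fin.ext htr, SSet.δ_comp_σ_succ_apply]
    rw [toSSet_δ_mul, hδσ, mul_inv_cancel_left]
  · suffices G.toSSet.δ j (G.toSSet.σ r z) = 1 by rw [toSSet_δ_mul, hwj, this, mul_one]
    rcases hjr with hjr | hjr
    · have hjt : j < t := by rw [Fin.lt_def]; omega
      refine δ_σ_eq_one_of_lt (by simpa [Fin.lt_def] using hjr) ?_
      rw [toSSet_δ_mul, toSSet_δ_inv, hx.δ_castPred_δ_eq hj ht hwj hjt, inv_mul_cancel]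
    · have htj : t < j := by rw [Fin.lt_def]; omega
      refine δ_σ_eq_one_of_gt (by simpa [Fin.lt_def] using hjr) ?_
      rw [toSSet_δ_mul, toSSet_δ_inv, hx.δ_pred_δ_eq hj ht hwj htj, inv_mul_cancel]

lemma exists_mem_forall_lt_δ_eq {n : ℕ} {i : Fin (n + 3)}
    {x : ∀ j : Fin (n + 3), j ≠ i → G.toSSet _⦋n + 1⦌} (hx : SSet.horn.IsCompatibleSimplices x)
    (hxK : ∀ j hj, x j hj ∈ K.obj (n + 1)) {a : ℕ} (ha : a ≤ i) :
    ∃ w ∈ K.obj (n + 2), ∀ j (hj : j ≠ i), (j : ℕ) < a → G.toSSet.δ j w = x j hj := by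
  induction a with
  | zero => exact ⟨1, one_mem _, fun j _ hj ↦ by omega⟩
  | succ a ih =>
    obtain ⟨w, hw, hwx⟩ := ih (by omega)
    have ht : (⟨a, by omega⟩ : Fin (n + 3)) ≠ i := by rw [Ne, Fin.ext_iff]; simp; omega
    obtain ⟨w', hw', hw't, hw'x⟩ := K.exists_mem_δ_eq_of_δ_eq hx hxK hw ht ⟨a, by omega⟩
      (Or.inl rfl)
    refine ⟨w', hw', fun j hj hja ↦ ?_⟩
    rcases (show (j : ℕ) < a ∨ (j : ℕ) = a by omega) with hja | hja
    · exact hw'x j hj (Or.inl hja) (hwx j hj hja)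
    · obtain ⟨j, _⟩ := j
      subst hja
      exact hw't

lemma exists_mem_forall_δ_eq_succ {n : ℕ} {i : Fin (n + 3)}
    {x : ∀ j : Fin (n + 3), j ≠ i → G.toSSet _⦋n + 1⦌} (hx : SSet.horn.IsCompatibleSimplices x)
    (hxK : ∀ j hj, x j hj ∈ K.obj (n + 1)) :
    ∃ w ∈ K.obj (n + 2), ∀ j hj, G.toSSet.δ j w = x j hj := by
  have down (b : ℕ) (hib : i ≤ b) (hb : b ≤ n + 2) : ∃ w ∈ K.obj (n + 2),
      ∀ j (hj : j ≠ i), ((j : ℕ) < i ∨ b < j) → G.toSSet.δ j w = x j hj := by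
    induction hb using Nat.decreasingInduction with
    | self =>
      obtain ⟨w, hw, hwx⟩ := K.exists_mem_forall_lt_δ_eq hx hxK le_rfl
      exact ⟨w, hw, fun j hj hji ↦ hwx j hj (by omega)⟩
    | of_succ b hb ih =>
      obtain ⟨w, hw, hwx⟩ := ih (by omega)
      have ht : (⟨b + 1, by omega⟩ : Fin (n + 3)) ≠ i := by rw [Ne, Fin.ext_iff]; simp; omega
      obtain ⟨w', hw', hw't, hw'x⟩ := K.exists_mem_δ_eq_of_δ_eq hx hxK hw ht ⟨b, by omega⟩
        (Or.inr rfl)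
      refine ⟨w', hw', fun j hj hjb ↦ ?_⟩
      rcases (show (j : ℕ) < i ∨ b + 1 < j ∨ (j : ℕ) = b + 1 by omega) with hjb | hjb | hjb
      · exact hw'x j hj (Or.inl (show (j : ℕ) < b by omega)) (hwx j hj (Or.inl hjb))
      · exact hw'x j hj (Or.inr hjb) (hwx j hj (Or.inr hjb))
      · obtain ⟨j, _⟩ := j
        subst hjb
        exact hw't
  obtain ⟨w, hw, hwx⟩ := down i le_rfl (by omega)
  exact ⟨w, hw, fun j hj ↦ hwx j hj (by rw [Ne, Fin.ext_iff] at hj; omega)⟩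

lemma exists_mem_forall_δ_eq_zero {i : Fin 2} {x : ∀ j : Fin 2, j ≠ i → G.toSSet _⦋0⦌}
    (hxK : ∀ j hj, x j hj ∈ K.obj 0) :
    ∃ w ∈ K.obj 1, ∀ j hj, G.toSSet.δ j w = x j hj := by
  have hrev : i.rev ≠ i := by fin_cases i <;> decide
  refine ⟨G.toSSet.σ 0 (x i.rev hrev), K.σ_mem 0 (hxK _ _), fun j hj ↦ ?_⟩
  obtain rfl : j = i.rev := by fin_cases i <;> fin_cases j <;> simp_all
  fin_cases i
  · exact SSet.δ_comp_σ_succ_apply 0 _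
  · exact SSet.δ_comp_σ_self_apply 0 _

lemma exists_mem_forall_δ_eq {n : ℕ} {i : Fin (n + 2)}
    {x : ∀ j : Fin (n + 2), j ≠ i → G.toSSet _⦋n⦌} (hx : SSet.horn.IsCompatibleSimplices x)
    (hxK : ∀ j hj, x j hj ∈ K.obj n) :
    ∃ w ∈ K.obj (n + 1), ∀ j hj, G.toSSet.δ j w = x j hj :=
  match n with
  | 0 => K.exists_mem_forall_δ_eq_zero hxK
  | _ + 1 => K.exists_mem_forall_δ_eq_succ hx hxK

end SimplicialSubgroup

end CategoryTheory.SimplicialObject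

open CategoryTheory.SimplicialObject in
/-- a levelwise surjective homomorphism of simplicial groups induces a
Kan fibration on underlying simplicial sets (RLP against all horn inclusions). -/
theorem surjective_simplicial_group_hom_is_kan_fibration
    (G H : SimplexCategoryᵒᵖ ⥤ GrpCat.{u}) (f : G ⟶ H)
    (hsurj : ∀ X : SimplexCategoryᵒᵖ, Function.Surjective (f.app X)) :
    ∀ (n : ℕ) (i : Fin (n + 1)),
      HasLiftingProperty (SSet.horn n i).ι (Functor.whiskerRight f (forget GrpCat)) := by
  intro n i
  obtain _ | n := n
  · exact SSet.horn.hasLiftingProperty_zero i _ (hsurj _)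
  refine SSet.horn.hasLiftingProperty_of_exists_lift _ fun u y hy ↦ ?_
  obtain ⟨k, rfl⟩ := hsurj _ y
  let x j (hj : j ≠ i) := u.app _ (SSet.horn.face i j hj) * ((toSSet G).δ j k)⁻¹
  have hxK j hj : x j hj ∈ (SimplicialSubgroup.ker f).obj n := by
    rw [SimplicialSubgroup.ker, MonoidHom.mem_ker, map_mul, map_inv, toSSet_δ_naturality, hy j hj]
    exact mul_inv_cancel _
  obtain ⟨w, hw, hwx⟩ := (SimplicialSubgroup.ker f).exists_mem_forall_δ_eq
    (isCompatibleSimplices_mul_inv (SSet.horn.isCompatibleSimplices_app_face u)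
      (SSet.horn.isCompatibleSimplices_δ k)) hxK
  refine ⟨w * k, fun j hj ↦ ?_, ?_⟩
  · rw [toSSet_δ_mul, hwx, inv_mul_cancel_right]
  · change (f.app _).hom (w * k) = (f.app _).hom k
    rw [map_mul, MonoidHom.mem_ker.mp hw, one_mul]
end

section
/- Let g and h be nilpotent dg Lie algebras over a field of characteristic zero and f: g → h a surjective dg Lie algebra map. Then the induced map MC(g) → MC(h) on Maurer–Cartan sets need not be surjective in general, but the induced map on Maurer–Cartan sets of the dg Lie algebras tensored with any finite-dimensional nilpotent commutative algebra m, MC(m ⊗ g) → MC(m ⊗ h), is surjective whenever f is surjective and a quasi-isomorphism. -/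
/-!
Lift a Maurer–Cartan element `v` of `m ⊗ h` to any `u` with `(1 ⊗ f) u = v`. Its curvature
`F(u) = du + ½[u,u]` then lies in `m ⊗ K` with `K = ker f`, and `K` is acyclic because `f` is a
surjective quasi-isomorphism; over a field, acyclicity survives tensoring with any vector space.
If `F(u) ∈ m^(s+1) ⊗ K`, the Bianchi identity `dF(u) = -[u, F(u)]` puts `dF(u)` in
`m^(s+2) ⊗ g`, so `F(u) ≡ dξ` modulo `m^(s+2)` for some `ξ ∈ m^(s+1) ⊗ K¹`, and then
`F(u - ξ) = F(u) - dξ - [u, ξ] + ½[ξ, ξ]` lies in `m^(s+2) ⊗ K`. As `m` is nilpotent, finitely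
many such corrections make the curvature vanish.
-/

/-- A differential graded Lie algebra structure on a ℤ-graded vector space `L`,
with differential of degree `+1`, graded antisymmetry, graded Leibniz rule and
graded Jacobi identity (signs via the Koszul rule). -/
structure DGLAOn (k : Type) [Field k] (L : ℤ → Type)
    [∀ i, AddCommGroup (L i)] [∀ i, Module k (L i)] where
  bracket : ∀ {i j : ℤ}, L i →ₗ[k] L j →ₗ[k] L (i + j)
  d : ∀ {i : ℤ}, L i →ₗ[k] L (i + 1)
  d_sq : ∀ {i : ℤ} (x : L i), d (d x) = 0
  antisymm : ∀ {i j : ℤ} (x : L i) (y : L j),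
    bracket x y = (-((-1 : k) ^ (i * j))) •
      cast (congrArg L (add_comm j i)) (bracket y x)
  leibniz : ∀ {i j : ℤ} (x : L i) (y : L j),
    d (bracket x y)
      = cast (congrArg L (show i + 1 + j = i + j + 1 by ring)) (bracket (d x) y)
      + ((-1 : k) ^ i) •
          cast (congrArg L (show i + (j + 1) = i + j + 1 by ring)) (bracket x (d y))
  jacobi : ∀ {i j l : ℤ} (x : L i) (y : L j) (z : L l),
    ((-1 : k) ^ (i * l)) •
        cast (congrArg L (show i + (j + l) = i + j + l by ring)) (bracket x (bracket y z))
      + ((-1 : k) ^ (i * j)) •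
          cast (congrArg L (show j + (l + i) = i + j + l by ring)) (bracket y (bracket z x))
      + ((-1 : k) ^ (l * j)) •
          cast (congrArg L (show l + (i + j) = i + j + l by ring)) (bracket z (bracket x y))
      = 0

variable {k : Type} [Field k] {L : ℤ → Type} [∀ i, AddCommGroup (L i)] [∀ i, Module k (L i)]

/-- The Maurer–Cartan equation `dx + ½[x,x] = 0` for a degree-one element. -/
def DGLAOn.IsMC (g : DGLAOn k L) (x : L 1) : Prop :=
  g.d x + (2 : k)⁻¹ • g.bracket x x = 0

/-- A dg Lie algebra is nilpotent if it has a finite central filtration: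
`F 0 = ⊤`, `F N = ⊥`, and `⁅L, F n⁆ ⊆ F (n+1)`. -/
def DGLAOn.IsNilpotent (g : DGLAOn k L) : Prop :=
  ∃ (N : ℕ) (F : ℕ → ∀ i : ℤ, Submodule k (L i)),
    (∀ i, F 0 i = ⊤) ∧ (∀ i, F N i = ⊥) ∧
    ∀ (n : ℕ) {i j : ℤ} (x : L i) (y : L j), y ∈ F n j → g.bracket x y ∈ F (n + 1) (i + j)

open TensorProduct

variable {Lg Lh : ℤ → Type} [∀ i, AddCommGroup (Lg i)] [∀ i, Module k (Lg i)]
  [∀ i, AddCommGroup (Lh i)] [∀ i, Module k (Lh i)]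

/-- A morphism of dg Lie algebras: a degreewise linear map commuting with the
differentials and the brackets. -/
def IsDGLAHom (g : DGLAOn k Lg) (h : DGLAOn k Lh) (f : ∀ i : ℤ, Lg i →ₗ[k] Lh i) : Prop :=
  (∀ (i : ℤ) (x : Lg i), f (i + 1) (g.d x) = h.d (f i x)) ∧
  (∀ (i j : ℤ) (x : Lg i) (y : Lg j),
    f (i + j) (g.bracket x y) = h.bracket (f i x) (f j y))

/-- `f` is a quasi-isomorphism: it induces a bijection on cohomology
(surjectivity and injectivity on cohomology classes, stated elementwise). -/
def IsQuasiIso (g : DGLAOn k Lg) (h : DGLAOn k Lh) (f : ∀ i : ℤ, Lg i →ₗ[k] Lh i) : Prop :=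
  (∀ (i : ℤ) (y : Lh i), h.d y = 0 →
      ∃ x : Lg i, g.d x = 0 ∧ ∃ z : Lh (i - 1),
        f i x - y = cast (congrArg Lh (show i - 1 + 1 = i by ring)) (h.d z)) ∧
  (∀ (i : ℤ) (x : Lg i), g.d x = 0 →
      (∃ z : Lh (i - 1), f i x = cast (congrArg Lh (show i - 1 + 1 = i by ring)) (h.d z)) →
      ∃ w : Lg (i - 1), x = cast (congrArg Lg (show i - 1 + 1 = i by ring)) (g.d w))

namespace DGLAOn

variable (g : DGLAOn k L)

def curvature (x : L 1) : L (1 + 1) := g.d x + (2 : k)⁻¹ • g.bracket x x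

theorem bracket_comm_of_one (x y : L 1) : g.bracket x y = g.bracket y x := by
  simpa using g.antisymm x y

theorem bracket_bracket_self (h3 : (3 : k) ≠ 0) (x : L 1) :
    g.bracket x (g.bracket x x) = 0 := by
  have hjac : (-3 : k) • g.bracket x (g.bracket x x) = 0 := by
    have := g.jacobi x x x
    norm_num at this
    rw [← this]
    module
  exact (smul_eq_zero.1 hjac).resolve_left (neg_ne_zero.2 h3)

theorem d_curvature (h2 : (2 : k) ≠ 0) (h3 : (3 : k) ≠ 0) (x : L 1) :
    g.d (g.curvature x) = -g.bracket x (g.curvature x) := by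
  have hanti : g.bracket (g.d x) x = -g.bracket x (g.d x) := by
    simpa using g.antisymm (g.d x) x
  have hleib : g.d (g.bracket x x) = -(2 : k) • g.bracket x (g.d x) := by
    have := g.leibniz x x
    simp only [cast_eq, hanti] at this
    rw [this]
    module
  rw [curvature, map_add, map_smul, g.d_sq, hleib, map_add, map_smul,
    g.bracket_bracket_self h3, smul_zero, add_zero, zero_add, smul_smul]
  simp [h2]

theorem curvature_sub (h2 : (2 : k) ≠ 0) (x y : L 1) :
    g.curvature (x - y) = g.curvature x - g.d y - g.bracket x y + (2 : k)⁻¹ • g.bracket y y := by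
  simp only [curvature, map_sub, LinearMap.sub_apply, g.bracket_comm_of_one y x]
  linear_combination (norm := module) (inv_mul_cancel₀ h2).symm • g.bracket x y

end DGLAOn

theorem IsDGLAHom.map_curvature {g : DGLAOn k Lg} {h : DGLAOn k Lh}
    {f : ∀ i : ℤ, Lg i →ₗ[k] Lh i} (hf : IsDGLAHom g h f) (x : Lg 1) :
    f (1 + 1) (g.curvature x) = h.curvature (f 1 x) := by
  rw [DGLAOn.curvature, DGLAOn.curvature, map_add, map_smul, hf.1, hf.2]

theorem IsQuasiIso.exists_d_eq_of_mem_ker {g : DGLAOn k Lg} {h : DGLAOn k Lh}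
    {f : ∀ i : ℤ, Lg i →ₗ[k] Lh i} (hqis : IsQuasiIso g h f) (hf : IsDGLAHom g h f)
    (hsurj : Function.Surjective (f 0)) :
    ∀ x ∈ LinearMap.ker (f (1 + 1)), g.d x = 0 → ∃ a ∈ LinearMap.ker (f 1), g.d a = x := by
  intro x hx hdx
  obtain ⟨w, hw⟩ : ∃ w : Lg 1, x = g.d w := hqis.2 (1 + 1) x hdx ⟨0, by simpa using hx⟩
  have hdfw : h.d (f 1 w) = 0 := by rw [← hf.1, ← hw, hx]
  obtain ⟨x₁, hdx₁, z, hz⟩ : ∃ x₁, g.d x₁ = 0 ∧ ∃ z : Lh 0, f 1 x₁ - f 1 w = h.d z :=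
    hqis.1 1 (f 1 w) hdfw
  obtain ⟨b, hfb, hdb⟩ : ∃ b : Lg 1, f 1 b = h.d z ∧ g.d b = 0 := by
    obtain ⟨z', rfl⟩ := hsurj z
    exact ⟨g.d z', hf.1 0 z', g.d_sq z'⟩
  refine ⟨w - x₁ + b, ?_, ?_⟩
  · rw [LinearMap.mem_ker, map_add, map_sub, hfb, ← hz]
    abel
  · rw [map_add, map_sub, hdb, hdx₁, hw]
    abel

-- the image of `P ⊗[k] Q` in `M ⊗[k] A`
local notation:100 P " ⊗ˢ " Q => Submodule.map₂ (TensorProduct.mk _ _ _) P Q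

section TensorSubmodule

variable {M A B C : Type*} [AddCommGroup M] [Module k M] [AddCommGroup A] [Module k A]
  [AddCommGroup B] [Module k B] [AddCommGroup C] [Module k C]

theorem Submodule.apply_apply_mem_of_mem_map₂_mk {M' A' : Type*} [AddCommGroup M'] [Module k M']
    [AddCommGroup A'] [Module k A'] {P : Submodule k M} {Q : Submodule k A}
    {P' : Submodule k M'} {Q' : Submodule k A'} {T : Submodule k B}
    (G : M ⊗[k] A →ₗ[k] M' ⊗[k] A' →ₗ[k] B)
    (hG : ∀ p ∈ P, ∀ q ∈ Q, ∀ p' ∈ P', ∀ q' ∈ Q', G (p ⊗ₜ q) (p' ⊗ₜ q') ∈ T)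
    {x : M ⊗[k] A} {y : M' ⊗[k] A'} (hx : x ∈ P ⊗ˢ Q) (hy : y ∈ P' ⊗ˢ Q') : G x y ∈ T :=
  (Submodule.map₂_le (r := T.comap (G.flip y))).2
    (fun p hp q hq => (Submodule.map₂_le (r := T.comap (G (p ⊗ₜ q)))).2 (hG p hp q hq) hy) hx

theorem Submodule.mem_map₂_mk_inf_ker {U : Submodule k M} {K : Submodule k B} {d : B →ₗ[k] C}
    {y : M ⊗[k] B} (hy : y ∈ U ⊗ˢ K) (hdy : LinearMap.lTensor M d y = 0) :
    y ∈ U ⊗ˢ (K ⊓ LinearMap.ker d) := by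
  rw [← TensorProduct.range_mapIncl] at hy
  obtain ⟨z, rfl⟩ := hy
  set d' := d ∘ₗ K.subtype
  have hz : LinearMap.lTensor U d' z = 0 := by
    apply Module.Flat.rTensor_preserves_injective_linearMap (M := C) U.subtype U.injective_subtype
    rw [map_zero, ← hdy, ← LinearMap.comp_apply, LinearMap.rTensor_comp_lTensor,
      ← LinearMap.comp_apply, LinearMap.lTensor_comp_map]
  obtain ⟨w, rfl⟩ := (Module.Flat.lTensor_exact U (LinearMap.exact_subtype_ker_map d') z).1 hz
  have hw := LinearMap.mem_range_self
    (TensorProduct.map U.subtype (K.subtype ∘ₗ (LinearMap.ker d').subtype)) w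
  rw [TensorProduct.range_map, Submodule.range_subtype, ← LinearMap.map_lTensor] at hw
  refine Submodule.map₂_le_map₂_right ?_ hw
  rintro _ ⟨⟨b, hb⟩, rfl⟩
  exact ⟨b.2, hb⟩

theorem Submodule.exists_lTensor_eq_of_mem_map₂_mk {U : Submodule k M} {KA : Submodule k A}
    {KB : Submodule k B} {d₁ : A →ₗ[k] B} {d₂ : B →ₗ[k] C}
    (hexact : ∀ b ∈ KB, d₂ b = 0 → ∃ a ∈ KA, d₁ a = b)
    {y : M ⊗[k] B} (hy : y ∈ U ⊗ˢ KB) (hdy : LinearMap.lTensor M d₂ y = 0) :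
    ∃ η ∈ U ⊗ˢ KA, LinearMap.lTensor M d₁ η = y := by
  refine (Submodule.map₂_le (r := (U ⊗ˢ KA).map (LinearMap.lTensor M d₁))).2 ?_
    (Submodule.mem_map₂_mk_inf_ker hy hdy)
  rintro u hu b ⟨hb, hdb⟩
  obtain ⟨a, ha, rfl⟩ := hexact b hb hdb
  exact ⟨u ⊗ₜ a, Submodule.apply_mem_map₂ _ hu ha, rfl⟩

theorem Submodule.exists_sub_lTensor_mem_map₂_mk {V' V : Submodule k M} (hV : V' ≤ V)
    {KA : Submodule k A} {KB : Submodule k B} {d₁ : A →ₗ[k] B} {d₂ : B →ₗ[k] C}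
    (hexact : ∀ b ∈ KB, d₂ b = 0 → ∃ a ∈ KA, d₁ a = b)
    {c : M ⊗[k] B} (hc : c ∈ V ⊗ˢ KB) (hdc : LinearMap.lTensor M d₂ c ∈ V' ⊗ˢ ⊤) :
    ∃ ξ ∈ V ⊗ˢ KA, c - LinearMap.lTensor M d₁ ξ ∈ V' ⊗ˢ KB := by
  obtain ⟨r, hr⟩ := V'.subtype.exists_leftInverse_of_injective V'.ker_subtype
  -- `π` projects onto `V'`, so `c - (π ⊗ 1) c` is a cycle of `V ⊗ KB` congruent to `c` mod `V'`
  set π := V'.subtype ∘ₗ r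
  have hπV' : ∀ x ∈ V', π x = x := fun x hx =>
    congrArg Subtype.val (LinearMap.congr_fun hr ⟨x, hx⟩)
  have hπc : LinearMap.rTensor B π c ∈ V' ⊗ˢ KB :=
    (Submodule.map₂_le (r := (V' ⊗ˢ KB).comap (LinearMap.rTensor B π))).2
      (fun p _ q hq => Submodule.apply_mem_map₂ _ (r p).2 hq) hc
  have hy : c - LinearMap.rTensor B π c ∈ V ⊗ˢ KB :=
    sub_mem hc (Submodule.map₂_le_map₂_left hV hπc)
  have hdy : LinearMap.lTensor M d₂ (c - LinearMap.rTensor B π c) = 0 := by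
    have hcomm : LinearMap.lTensor M d₂ (c - LinearMap.rTensor B π c)
        = LinearMap.rTensor C (LinearMap.id - π) (LinearMap.lTensor M d₂ c) := by
      rw [map_sub, LinearMap.rTensor_sub, LinearMap.rTensor_id, LinearMap.sub_apply,
        LinearMap.id_apply, ← LinearMap.comp_apply, LinearMap.lTensor_comp_rTensor,
        ← LinearMap.rTensor_comp_lTensor, LinearMap.comp_apply]
    rw [hcomm, ← Submodule.mem_bot k]
    refine (Submodule.map₂_le (r := (⊥ : Submodule k (M ⊗[k] C)).comap _)).2 ?_ hdc
    intro p hp q _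
    simp [hπV' p hp]
  obtain ⟨ξ, hξ, hdξ⟩ := Submodule.exists_lTensor_eq_of_mem_map₂_mk hexact hy hdy
  exact ⟨ξ, hξ, by rwa [hdξ, sub_sub_cancel]⟩

end TensorSubmodule

section IdealFiltration

variable {R : Type*} [CommRing R] [Algebra k R]

variable (k) in
def Ideal.powFiltration (m : Ideal R) (s : ℕ) : Submodule k m :=
  ((m ^ s).restrictScalars k).comap (m.subtype.restrictScalars k)

variable {m : Ideal R}

theorem Ideal.mem_powFiltration {s : ℕ} {a : m} : a ∈ m.powFiltration k s ↔ (a : R) ∈ m ^ s :=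
  Iff.rfl

theorem Ideal.powFiltration_one : m.powFiltration k 1 = ⊤ :=
  eq_top_iff.2 fun a _ => by simp [Ideal.mem_powFiltration]

theorem Ideal.powFiltration_antitone : Antitone (m.powFiltration k) :=
  fun _ _ hpq _ ha => Ideal.pow_le_pow_right hpq ha

theorem Ideal.mul_mem_powFiltration {p q : ℕ} {a b : m} (ha : a ∈ m.powFiltration k p)
    (hb : b ∈ m.powFiltration k q) :
    (⟨(a : R) * b, m.mul_mem_left _ b.2⟩ : m) ∈ m.powFiltration k (p + q) := by
  rw [Ideal.mem_powFiltration, pow_add]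
  exact Ideal.mul_mem_mul ha hb

theorem Ideal.powFiltration_eq_bot {N s : ℕ} (hN : m ^ N = ⊥) (hs : N ≤ s) :
    m.powFiltration k s = ⊥ :=
  eq_bot_iff.2 fun a ha => by
    replace ha := Ideal.pow_le_pow_right hs ha
    rw [hN, Ideal.mem_bot] at ha
    exact (Submodule.mem_bot k).2 (Subtype.ext ha)

end IdealFiltration

section TensorDGLA

variable {R : Type} [CommRing R] [Algebra k R] {m : Ideal R}

structure IsTensorDGLA (m : Ideal R) (g : DGLAOn k Lg)
    (tg : DGLAOn k (fun i : ℤ => m ⊗[k] Lg i)) : Prop where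
  bracket_tmul : ∀ (i j : ℤ) (a b : m) (x : Lg i) (y : Lg j),
    tg.bracket (a ⊗ₜ[k] x) (b ⊗ₜ[k] y)
      = (⟨(a : R) * b, m.mul_mem_left _ b.2⟩ : m) ⊗ₜ[k] g.bracket x y
  d_tmul : ∀ (i : ℤ) (a : m) (x : Lg i), tg.d (a ⊗ₜ[k] x) = a ⊗ₜ[k] g.d x

namespace IsTensorDGLA

variable {g : DGLAOn k Lg} {tg : DGLAOn k (fun i : ℤ => m ⊗[k] Lg i)}

theorem d_eq_lTensor (htg : IsTensorDGLA m g tg) (i : ℤ) :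
    (tg.d : m ⊗[k] Lg i →ₗ[k] m ⊗[k] Lg (i + 1)) = LinearMap.lTensor m g.d :=
  TensorProduct.ext' (htg.d_tmul i)

theorem bracket_mem (htg : IsTensorDGLA m g tg) {p q r : ℕ} (hr : r ≤ p + q) {i j : ℤ}
    {Qi : Submodule k (Lg i)} {Qj : Submodule k (Lg j)} {Qij : Submodule k (Lg (i + j))}
    (hQ : ∀ x ∈ Qi, ∀ y ∈ Qj, g.bracket x y ∈ Qij) {u : m ⊗[k] Lg i} {w : m ⊗[k] Lg j}
    (hu : u ∈ m.powFiltration k p ⊗ˢ Qi) (hw : w ∈ m.powFiltration k q ⊗ˢ Qj) :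
    tg.bracket u w ∈ m.powFiltration k r ⊗ˢ Qij := by
  refine Submodule.apply_apply_mem_of_mem_map₂_mk tg.bracket (fun a ha x hx b hb y hy => ?_) hu hw
  rw [htg.bracket_tmul]
  exact Submodule.apply_mem_map₂ _
    (Ideal.powFiltration_antitone hr (Ideal.mul_mem_powFiltration ha hb)) (hQ x hx y hy)

end IsTensorDGLA

theorem IsDGLAHom.lTensor {g : DGLAOn k Lg} {h : DGLAOn k Lh} {f : ∀ i : ℤ, Lg i →ₗ[k] Lh i}
    (hf : IsDGLAHom g h f) {tg : DGLAOn k (fun i : ℤ => m ⊗[k] Lg i)}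
    {th : DGLAOn k (fun i : ℤ => m ⊗[k] Lh i)} (htg : IsTensorDGLA m g tg)
    (hth : IsTensorDGLA m h th) :
    IsDGLAHom tg th (fun i => LinearMap.lTensor m (f i)) := by
  constructor
  · intro i u
    induction u using TensorProduct.induction_on with
    | zero => simp
    | tmul a x => simp [htg.d_tmul, hth.d_tmul, hf.1]
    | add u₁ u₂ h₁ h₂ => simp only [map_add, h₁, h₂]
  · intro i j u w
    induction u using TensorProduct.induction_on with
    | zero => simp
    | add u₁ u₂ h₁ h₂ => simp only [map_add, LinearMap.add_apply, h₁, h₂]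
    | tmul a x =>
      induction w using TensorProduct.induction_on with
      | zero => simp
      | tmul b y => simp [htg.bracket_tmul, hth.bracket_tmul, hf.2]
      | add w₁ w₂ h₁ h₂ => simp only [map_add, h₁, h₂]

end TensorDGLA

section Lifting

variable {R : Type} [CommRing R] [Algebra k R] {m : Ideal R} {g : DGLAOn k Lg}
  {tg : DGLAOn k (fun i : ℤ => m ⊗[k] Lg i)}

theorem IsTensorDGLA.exists_curvature_sub_mem (htg : IsTensorDGLA m g tg)
    (h2 : (2 : k) ≠ 0) (h3 : (3 : k) ≠ 0) {K₁ : Submodule k (Lg 1)}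
    {K₂ : Submodule k (Lg (1 + 1))} (hK : ∀ x, ∀ y ∈ K₁, g.bracket x y ∈ K₂)
    (hexact : ∀ b ∈ K₂, g.d b = 0 → ∃ a ∈ K₁, g.d a = b) {s : ℕ} {u : m ⊗[k] Lg 1}
    (hu : tg.curvature u ∈ m.powFiltration k (s + 1) ⊗ˢ K₂) :
    ∃ ξ ∈ m.powFiltration k (s + 1) ⊗ˢ K₁,
      tg.curvature (u - ξ) ∈ m.powFiltration k (s + 2) ⊗ˢ K₂ := by
  have hu₁ : u ∈ m.powFiltration k 1 ⊗ˢ (⊤ : Submodule k (Lg 1)) := by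
    rw [Ideal.powFiltration_one, TensorProduct.map₂_mk_top_top_eq_top]
    trivial
  have hdu : LinearMap.lTensor m g.d (tg.curvature u) ∈ m.powFiltration k (s + 2) ⊗ˢ ⊤ := by
    rw [← htg.d_eq_lTensor, tg.d_curvature h2 h3]
    exact neg_mem (htg.bracket_mem (by omega) (fun _ _ _ _ => Submodule.mem_top) hu₁ hu)
  obtain ⟨ξ, hξ, hdξ⟩ := Submodule.exists_sub_lTensor_mem_map₂_mk
    (Ideal.powFiltration_antitone (by omega)) hexact hu hdu
  refine ⟨ξ, hξ, ?_⟩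
  rw [tg.curvature_sub h2, htg.d_eq_lTensor]
  refine add_mem (sub_mem hdξ ?_) (Submodule.smul_mem _ _ ?_)
  · exact htg.bracket_mem (by omega) (fun x _ y hy => hK x y hy) hu₁ hξ
  · exact htg.bracket_mem (by omega) (fun x _ y hy => hK x y hy)
      (Submodule.map₂_le_map₂_right le_top hξ) hξ

theorem IsQuasiIso.exists_lift_curvature_mem_powFiltration {h : DGLAOn k Lh}
    {f : ∀ i : ℤ, Lg i →ₗ[k] Lh i} (hqis : IsQuasiIso g h f) (hf : IsDGLAHom g h f)
    (hsurj : ∀ i : ℤ, Function.Surjective (f i)) (h2 : (2 : k) ≠ 0) (h3 : (3 : k) ≠ 0)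
    {th : DGLAOn k (fun i : ℤ => m ⊗[k] Lh i)} (htg : IsTensorDGLA m g tg)
    (hth : IsTensorDGLA m h th) {v : m ⊗[k] Lh 1} (hv : th.IsMC v) (s : ℕ) :
    ∃ u : m ⊗[k] Lg 1, LinearMap.lTensor m (f 1) u = v ∧
      tg.curvature u ∈ m.powFiltration k (s + 1) ⊗ˢ LinearMap.ker (f (1 + 1)) := by
  induction s with
  | zero =>
    obtain ⟨u, rfl⟩ := LinearMap.lTensor_surjective m (hsurj 1) v
    refine ⟨u, rfl, ?_⟩
    have hcurv : LinearMap.lTensor m (f (1 + 1)) (tg.curvature u) = 0 :=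
      ((hf.lTensor htg hth).map_curvature u).trans hv
    have hu : tg.curvature u ∈ (⊤ : Submodule k m) ⊗ˢ ⊤ := by
      rw [TensorProduct.map₂_mk_top_top_eq_top]
      trivial
    simpa [Ideal.powFiltration_one] using Submodule.mem_map₂_mk_inf_ker hu hcurv
  | succ s ih =>
    obtain ⟨u, rfl, hu⟩ := ih
    have hK : ∀ x, ∀ y ∈ LinearMap.ker (f 1), g.bracket x y ∈ LinearMap.ker (f (1 + 1)) := by
      intro x y hy
      rw [LinearMap.mem_ker] at hy ⊢
      rw [hf.2, hy, map_zero]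
    obtain ⟨ξ, hξ, hξu⟩ := htg.exists_curvature_sub_mem h2 h3 hK
      (hqis.exists_d_eq_of_mem_ker hf (hsurj 0)) hu
    refine ⟨u - ξ, ?_, hξu⟩
    have hfξ : LinearMap.lTensor m (f 1) ξ = 0 := by
      rw [← Submodule.mem_bot k]
      refine (Submodule.map₂_le (r := (⊥ : Submodule k (m ⊗[k] Lh 1)).comap _)).2 ?_ hξ
      intro a _ x hx
      simp [LinearMap.mem_ker.1 hx]
    rw [map_sub, hfξ, sub_zero]

end Lifting

theorem mc_surjective_of_surjective_quasiIso_general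
    [CharZero k]
    (g : DGLAOn k Lg) (h : DGLAOn k Lh)
    (f : ∀ i : ℤ, Lg i →ₗ[k] Lh i)
    (hhom : IsDGLAHom g h f)
    (hsurj : ∀ i : ℤ, Function.Surjective (f i))
    (hqis : IsQuasiIso g h f)
    (R : Type) [CommRing R] [Algebra k R] [IsLocalRing R] [IsArtinianRing R]
    (tg : DGLAOn k (fun i : ℤ => (↥(IsLocalRing.maximalIdeal R)) ⊗[k] Lg i))
    (th : DGLAOn k (fun i : ℤ => (↥(IsLocalRing.maximalIdeal R)) ⊗[k] Lh i))
    (htg_br : ∀ (i j : ℤ) (a b : ↥(IsLocalRing.maximalIdeal R)) (x : Lg i) (y : Lg j),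
      tg.bracket (a ⊗ₜ[k] x) (b ⊗ₜ[k] y)
        = (⟨(a : R) * b, (IsLocalRing.maximalIdeal R).mul_mem_left _ b.2⟩ :
            ↥(IsLocalRing.maximalIdeal R)) ⊗ₜ[k] g.bracket x y)
    (htg_d : ∀ (i : ℤ) (a : ↥(IsLocalRing.maximalIdeal R)) (x : Lg i),
      tg.d (a ⊗ₜ[k] x) = a ⊗ₜ[k] g.d x)
    (hth_br : ∀ (i j : ℤ) (a b : ↥(IsLocalRing.maximalIdeal R)) (x : Lh i) (y : Lh j),
      th.bracket (a ⊗ₜ[k] x) (b ⊗ₜ[k] y)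
        = (⟨(a : R) * b, (IsLocalRing.maximalIdeal R).mul_mem_left _ b.2⟩ :
            ↥(IsLocalRing.maximalIdeal R)) ⊗ₜ[k] h.bracket x y)
    (hth_d : ∀ (i : ℤ) (a : ↥(IsLocalRing.maximalIdeal R)) (x : Lh i),
      th.d (a ⊗ₜ[k] x) = a ⊗ₜ[k] h.d x) :
    ∀ v : (↥(IsLocalRing.maximalIdeal R)) ⊗[k] Lh 1, th.IsMC v →
      ∃ u : (↥(IsLocalRing.maximalIdeal R)) ⊗[k] Lg 1,
        tg.IsMC u ∧ TensorProduct.map LinearMap.id (f 1) u = v := by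
  intro v hv
  obtain ⟨N, hN⟩ := (isArtinianRing_iff_isNilpotent_maximalIdeal R).1 ‹_›
  obtain ⟨u, hu, hcurv⟩ := hqis.exists_lift_curvature_mem_powFiltration hhom hsurj
    two_ne_zero three_ne_zero ⟨htg_br, htg_d⟩ ⟨hth_br, hth_d⟩ hv N
  rw [Ideal.powFiltration_eq_bot hN N.le_succ, Submodule.map₂_bot_left, Submodule.mem_bot] at hcurv
  exact ⟨u, hcurv, hu⟩

/-- let `f : g → h` be a surjective quasi-isomorphism of nilpotent dg
Lie algebras over a field of characteristic zero and let `m` be the maximal ideal of a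
(finite-dimensional) artinian local `k`-algebra `R`.  Then for the induced dg Lie
algebra structures on `m ⊗ g` and `m ⊗ h` (bracket `[a⊗x, b⊗y] = ab ⊗ [x,y]`,
differential `d(a⊗x) = a ⊗ dx`), the induced map `MC(m ⊗ g) → MC(m ⊗ h)` on
Maurer–Cartan sets is surjective. -/
theorem mc_surjective_of_surjective_quasiIso
    [CharZero k]
    (g : DGLAOn k Lg) (h : DGLAOn k Lh) (hg : g.IsNilpotent) (hh : h.IsNilpotent)
    (f : ∀ i : ℤ, Lg i →ₗ[k] Lh i)
    (hhom : IsDGLAHom g h f)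
    (hsurj : ∀ i : ℤ, Function.Surjective (f i))
    (hqis : IsQuasiIso g h f)
    (R : Type) [CommRing R] [Algebra k R] [IsLocalRing R] [IsArtinianRing R]
    [FiniteDimensional k R]
    (tg : DGLAOn k (fun i : ℤ => (↥(IsLocalRing.maximalIdeal R)) ⊗[k] Lg i))
    (th : DGLAOn k (fun i : ℤ => (↥(IsLocalRing.maximalIdeal R)) ⊗[k] Lh i))
    (htg_br : ∀ (i j : ℤ) (a b : ↥(IsLocalRing.maximalIdeal R)) (x : Lg i) (y : Lg j),
      tg.bracket (a ⊗ₜ[k] x) (b ⊗ₜ[k] y)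
        = (⟨(a : R) * b, (IsLocalRing.maximalIdeal R).mul_mem_left _ b.2⟩ :
            ↥(IsLocalRing.maximalIdeal R)) ⊗ₜ[k] g.bracket x y)
    (htg_d : ∀ (i : ℤ) (a : ↥(IsLocalRing.maximalIdeal R)) (x : Lg i),
      tg.d (a ⊗ₜ[k] x) = a ⊗ₜ[k] g.d x)
    (hth_br : ∀ (i j : ℤ) (a b : ↥(IsLocalRing.maximalIdeal R)) (x : Lh i) (y : Lh j),
      th.bracket (a ⊗ₜ[k] x) (b ⊗ₜ[k] y)
        = (⟨(a : R) * b, (IsLocalRing.maximalIdeal R).mul_mem_left _ b.2⟩ :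
            ↥(IsLocalRing.maximalIdeal R)) ⊗ₜ[k] h.bracket x y)
    (hth_d : ∀ (i : ℤ) (a : ↥(IsLocalRing.maximalIdeal R)) (x : Lh i),
      th.d (a ⊗ₜ[k] x) = a ⊗ₜ[k] h.d x) :
    ∀ v : (↥(IsLocalRing.maximalIdeal R)) ⊗[k] Lh 1, th.IsMC v →
      ∃ u : (↥(IsLocalRing.maximalIdeal R)) ⊗[k] Lg 1,
        tg.IsMC u ∧ TensorProduct.map LinearMap.id (f 1) u = v :=
  mc_surjective_of_surjective_quasiIso_general g h f hhom hsurj hqis R tg th htg_br htg_d hth_br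
    hth_d
end
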